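/- arXiv:2508.17088 — 6 statements merged into one kernel-verified Lean document; each statement's English description precedes it below -/
import Mathlib

section
/- A family of d+1 vectors f₁, …, f_{d+1} in ℂ^d is a dynamical frame (i.e., spans ℂ^d and satisfies f_k = T^(k-1) f₁ for some linear T) if and only if the first d vectors f₁, …, f_d form a basis of ℂ^d. -/
open Polynomial Module Submodule

/-- A family of d+1 vectors in ℂ^d is a dynamical frame iff its first d vectors form a
basis of ℂ^d. -/
theorem stmt_3 (d : ℕ) (f : Fin (d + 1) → EuclideanSpace ℂ (Fin d)) :
    (Submodule.span ℂ (Set.range f) = ⊤ ∧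
        ∃ T : Module.End ℂ (EuclideanSpace ℂ (Fin d)),
          ∀ k : Fin (d + 1), f k = (T ^ (k : ℕ)) (f 0)) ↔
      (LinearIndependent ℂ (fun k : Fin d => f k.castSucc) ∧
        Submodule.span ℂ (Set.range fun k : Fin d => f k.castSucc) = ⊤) := by
  have hrank : Module.finrank ℂ (EuclideanSpace ℂ (Fin d)) = d := by
    simp [finrank_euclideanSpace]
  constructor
  · rintro ⟨hspan, T, hT⟩
    set W := Submodule.span ℂ (Set.range fun k : Fin d => f k.castSucc) with hW
    have hpow : ∀ i : ℕ, i < d → (T ^ i) (f 0) ∈ W := by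
      intro i hi
      have h1 : f ((⟨i, hi⟩ : Fin d).castSucc) = (T ^ i) (f 0) := by
        simpa using hT ((⟨i, hi⟩ : Fin d).castSucc)
      rw [← h1]
      exact Submodule.subset_span ⟨⟨i, hi⟩, rfl⟩
    have hd : (T ^ d) (f 0) ∈ W := by
      rcases Nat.eq_zero_or_pos d with hd0 | hd0
      · subst hd0
        have : (T ^ 0) (f 0) = 0 := Subsingleton.elim _ _
        rw [this]; exact W.zero_mem
      · set p := LinearMap.charpoly T with hp
        have hCH : Polynomial.aeval T p = 0 := LinearMap.aeval_self_charpoly T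
        have hdeg : p.natDegree = d := by rw [hp, LinearMap.charpoly_natDegree, hrank]
        set q : ℂ[X] := X ^ d - p with hq
        have hqdeg : q.natDegree < d := by
          rcases eq_or_ne q 0 with h0 | h0
          · simpa [h0] using hd0
          · have hdq : q.degree < (d : ℕ) := by
              have := Polynomial.degree_sub_lt
                (p := (X : ℂ[X]) ^ d) (q := p)
                (by rw [degree_X_pow, Polynomial.degree_eq_natDegree (LinearMap.charpoly_monic T).ne_zero, hdeg])
                (by exact pow_ne_zero _ X_ne_zero)
                (by simp [leadingCoeff_X_pow, hp, (LinearMap.charpoly_monic T).leadingCoeff])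
              simpa [degree_X_pow] using this
            exact (Polynomial.natDegree_lt_iff_degree_lt h0).2 hdq
        have hTd : (T ^ d) (f 0) = (Polynomial.aeval T q) (f 0) := by
          have : Polynomial.aeval T q = T ^ d := by
            rw [hq, map_sub, hCH, sub_zero, map_pow, aeval_X]
          rw [this]
        rw [hTd, Polynomial.aeval_eq_sum_range' hqdeg]
        simp only [LinearMap.coe_sum, Finset.sum_apply, LinearMap.smul_apply]
        exact Submodule.sum_mem _ fun i hi =>
          Submodule.smul_mem _ _ (hpow i (Finset.mem_range.mp hi))
    have hWtop : W = ⊤ := by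
      rw [← top_le_iff, ← hspan, Submodule.span_le]
      rintro x ⟨k, rfl⟩
      rcases lt_or_eq_of_le (Nat.lt_succ_iff.mp k.isLt) with hk | hk
      · have : k = (⟨(k : ℕ), hk⟩ : Fin d).castSucc := by
          apply Fin.ext; rfl
        rw [this]
        exact Submodule.subset_span ⟨⟨(k : ℕ), hk⟩, rfl⟩
      · rw [hT k, hk]; exact hd
    refine ⟨?_, hWtop⟩
    exact linearIndependent_of_top_le_span_of_card_eq_finrank
      (by rw [← hW, hWtop]) (by simp [hrank])
  · rintro ⟨hli, hsp⟩
    let B : Basis (Fin d) ℂ (EuclideanSpace ℂ (Fin d)) :=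
      Basis.mk hli (by rw [hsp])
    have hB : ∀ k : Fin d, B k = f k.castSucc := fun k => Basis.mk_apply hli _ k
    set T : Module.End ℂ (EuclideanSpace ℂ (Fin d)) :=
      B.constr ℂ (fun k : Fin d => f k.succ) with hTdef
    have hTB : ∀ k : Fin d, T (f k.castSucc) = f k.succ := by
      intro k
      rw [← hB k, hTdef, Basis.constr_basis]
    have key : ∀ n : ℕ, ∀ h : n < d + 1, f ⟨n, h⟩ = (T ^ n) (f 0) := by
      intro n
      induction n with
      | zero => intro h; rfl
      | succ n ih =>
        intro h
        have hn : n < d := Nat.lt_of_succ_lt_succ h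
        have h1 : (⟨n + 1, h⟩ : Fin (d + 1)) = (⟨n, hn⟩ : Fin d).succ := rfl
        have h2 : (⟨n, hn⟩ : Fin d).castSucc = (⟨n, Nat.lt_succ_of_lt hn⟩ : Fin (d + 1)) := rfl
        rw [h1, ← hTB ⟨n, hn⟩, h2, ih (Nat.lt_succ_of_lt hn), pow_succ']
        rfl
    refine ⟨?_, T, ?_⟩
    · rw [← top_le_iff, ← hsp]
      apply Submodule.span_mono
      rintro x ⟨k, rfl⟩
      exact ⟨k.castSucc, rfl⟩
    · intro k
      have : f k = f ⟨(k : ℕ), k.isLt⟩ := by congr 1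
      rw [this, key (k : ℕ) k.isLt]
end

section
/- Every frame {f_k}_{k=1}^n for ℂ^d whose first d elements are linearly independent admits a dual frame of the form {T^(k-1) g₁}_{k=1}^n for some linear operator T : ℂ^d → ℂ^d and g₁ ∈ ℂ^d. -/
/-- Every frame {f_k}_{k=1}^n for ℂ^d whose first d elements are linearly independent
admits a dual frame of the form {T^(k-1) g₁}_{k=1}^n. -/
theorem stmt_6 (d n : ℕ) (hdn : d ≤ n) (f : Fin n → EuclideanSpace ℂ (Fin d))
    (hframe : Submodule.span ℂ (Set.range f) = ⊤)
    (hli : LinearIndependent ℂ (fun k : Fin d => f ⟨(k : ℕ), lt_of_lt_of_le k.2 hdn⟩)) :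
    ∃ (T : Module.End ℂ (EuclideanSpace ℂ (Fin d))) (g₁ : EuclideanSpace ℂ (Fin d)),
      ∀ x : EuclideanSpace ℂ (Fin d),
        x = ∑ k : Fin n, (inner ℂ ((T ^ (k : ℕ)) g₁) x : ℂ) • f k := by
  rcases Nat.eq_zero_or_pos d with hd | hd
  · subst hd
    exact ⟨0, 0, fun x => Subsingleton.elim _ _⟩
  · haveI : Nonempty (Fin d) := ⟨⟨0, hd⟩⟩
    -- basis from the first d vectors
    let b : Module.Basis (Fin d) ℂ (EuclideanSpace ℂ (Fin d)) :=
      basisOfLinearIndependentOfCardEqFinrank hli (by simp)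
    have hb : ∀ i, b i = f ⟨(i : ℕ), lt_of_lt_of_le i.2 hdn⟩ := fun i =>
      coe_basisOfLinearIndependentOfCardEqFinrank hli (by simp) ▸ rfl
    -- down-shift operator on the basis
    let A : Module.End ℂ (EuclideanSpace ℂ (Fin d)) :=
      b.constr ℂ (fun i : Fin d =>
        if h : 0 < (i : ℕ) then b ⟨(i : ℕ) - 1, (Nat.sub_lt h one_pos).trans i.2⟩ else 0)
    have hstep : ∀ (j : Fin d) (x), b.repr (A x) j =
        if h : (j : ℕ) + 1 < d then b.repr x ⟨(j : ℕ) + 1, h⟩ else 0 := by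
      intro j x
      have hmap : (b.coord j) ∘ₗ A =
          (if h : (j : ℕ) + 1 < d then b.coord ⟨(j : ℕ) + 1, h⟩ else (0 : _)) := by
        apply b.ext
        intro i
        simp only [LinearMap.comp_apply, A, Module.Basis.constr_basis]
        by_cases hi : 0 < (i : ℕ)
        · rw [dif_pos hi]
          by_cases hj : (j : ℕ) + 1 < d
          · rw [dif_pos hj]
            simp only [Module.Basis.coord_apply, Module.Basis.repr_self, Finsupp.single_apply]
            have : (⟨(i : ℕ) - 1, (Nat.sub_lt hi one_pos).trans i.2⟩ : Fin d) = j ↔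
                i = ⟨(j : ℕ) + 1, hj⟩ := by
              constructor <;> intro h <;> apply Fin.ext <;>
                simp [Fin.ext_iff] at h ⊢ <;> omega
            by_cases h : i = ⟨(j : ℕ) + 1, hj⟩
            · rw [if_pos (this.mpr h), if_pos h]
            · rw [if_neg (fun hh => h (this.mp hh)), if_neg h]
          · rw [dif_neg hj]
            simp only [Module.Basis.coord_apply, Module.Basis.repr_self, Finsupp.single_apply,
              LinearMap.zero_apply]
            rw [if_neg]
            intro hh
            apply hj
            have := congrArg Fin.val hh
            simp at this
            omega
        · rw [dif_neg hi]
          by_cases hj : (j : ℕ) + 1 < d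
          · rw [dif_pos hj]
            simp only [map_zero, Module.Basis.coord_apply, Module.Basis.repr_self, Finsupp.single_apply]
            rw [if_neg]
            intro hh
            have := congrArg Fin.val hh
            simp at this
            omega
          · rw [dif_neg hj]; simp
      have := LinearMap.congr_fun hmap x
      simpa [Module.Basis.coord_apply, apply_dite (fun g : _ →ₗ[ℂ] ℂ => g x)] using this
    have hkey : ∀ (k : ℕ) (x) (j : Fin d), b.repr ((A ^ k) x) j =
        if h : (j : ℕ) + k < d then b.repr x ⟨(j : ℕ) + k, h⟩ else 0 := by
      intro k
      induction k with
      | zero => intro x j; simp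
      | succ k ih =>
        intro x j
        rw [pow_succ, Module.End.mul_apply, ih (A x) j]
        by_cases h : (j : ℕ) + k < d
        · rw [dif_pos h, hstep ⟨(j : ℕ) + k, h⟩ x]
          by_cases h2 : (j : ℕ) + (k + 1) < d
          · rw [dif_pos (show (j : ℕ) + k + 1 < d by omega), dif_pos h2]
            rfl
          · rw [dif_neg (show ¬ ((j : ℕ) + k + 1 < d) by omega), dif_neg h2]
        · rw [dif_neg h, dif_neg (by omega)]
    -- the Riesz vector for the 0-th coordinate
    let g₁ : EuclideanSpace ℂ (Fin d) :=
      (InnerProductSpace.toDual ℂ _).symm ((b.coord ⟨0, hd⟩).toContinuousLinearMap)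
    have hg : ∀ x, (inner ℂ g₁ x : ℂ) = b.repr x ⟨0, hd⟩ := fun x =>
      InnerProductSpace.toDual_symm_apply
    let T : Module.End ℂ (EuclideanSpace ℂ (Fin d)) := LinearMap.adjoint A
    have hT : ∀ (k : ℕ) (x), (inner ℂ ((T ^ k) g₁) x : ℂ) = inner ℂ g₁ ((A ^ k) x) := by
      intro k
      induction k with
      | zero => intro x; simp
      | succ k ih =>
        intro x
        rw [pow_succ', Module.End.mul_apply, LinearMap.adjoint_inner_left, ih (A x),
          pow_succ, Module.End.mul_apply]
    refine ⟨T, g₁, fun x => ?_⟩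
    have hterm : ∀ k : Fin n, (inner ℂ ((T ^ (k : ℕ)) g₁) x : ℂ) • f k =
        if h : (k : ℕ) < d then b.repr x ⟨(k : ℕ), h⟩ • f k else 0 := by
      intro k
      rw [hT, hg, hkey]
      simp only [show ((⟨0, hd⟩ : Fin d) : ℕ) = 0 from rfl, Nat.zero_add]
      by_cases h : (k : ℕ) < d
      · rw [dif_pos h, dif_pos h]
      · rw [dif_neg h, dif_neg h, zero_smul]
    rw [show (∑ k : Fin n, (inner ℂ ((T ^ (k : ℕ)) g₁) x : ℂ) • f k) =
        ∑ k : Fin n, if h : (k : ℕ) < d then b.repr x ⟨(k : ℕ), h⟩ • f k else 0 from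
      Finset.sum_congr rfl (fun k _ => hterm k)]
    have hsub : ∑ k : Fin n, (if h : (k : ℕ) < d then b.repr x ⟨(k : ℕ), h⟩ • f k else 0) =
        ∑ k ∈ Finset.univ.map (Fin.castLEEmb hdn),
          (if h : (k : ℕ) < d then b.repr x ⟨(k : ℕ), h⟩ • f k else 0) := by
      refine (Finset.sum_subset (Finset.subset_univ _) (fun k _ hk => ?_)).symm
      rw [dif_neg]
      intro h
      apply hk
      simp only [Finset.mem_map, Finset.mem_univ, true_and, Fin.castLEEmb_apply]
      exact ⟨⟨(k : ℕ), h⟩, Fin.ext rfl⟩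
    rw [hsub, Finset.sum_map]
    have : ∀ j : Fin d, (if h : ((Fin.castLEEmb hdn j : Fin n) : ℕ) < d then
        b.repr x ⟨((Fin.castLEEmb hdn j : Fin n) : ℕ), h⟩ • f (Fin.castLEEmb hdn j) else 0) =
        b.repr x j • b j := by
      intro j
      rw [dif_pos (show ((Fin.castLEEmb hdn j : Fin n) : ℕ) < d from j.2)]
      rw [hb]
      rfl
    rw [Finset.sum_congr rfl (fun j _ => this j), b.sum_repr x]
end

section
/- If {T^(k-1) f₁}_{k=1}^n is a cyclic frame for ℂ^d (i.e., a frame with T^n = I), then for every ℓ with 1 ≤ ℓ ≤ n−d, the vectors T^(k-1) f₁ for k = ℓ+1, …, ℓ+d form a basis of ℂ^d. -/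
open Polynomial

lemma aux_mem_span (d : ℕ) (T : Module.End ℂ (EuclideanSpace ℂ (Fin d)))
    (f₁ : EuclideanSpace ℂ (Fin d)) (m : ℕ) :
    (T ^ m) f₁ ∈ Submodule.span ℂ (Set.range fun k : Fin d => (T ^ (k : ℕ)) f₁) := by
  rcases Nat.eq_zero_or_pos d with hd | hd
  · subst hd
    have hs : Subsingleton (EuclideanSpace ℂ (Fin 0)) := by
      constructor; intro a b; ext ⟨i, hi⟩; omega
    rw [Subsingleton.elim ((T ^ m) f₁) 0]
    exact Submodule.zero_mem _
  have hndeg : (LinearMap.charpoly T).natDegree = d := by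
    rw [LinearMap.charpoly_natDegree, finrank_euclideanSpace_fin]
  have hmonic : (LinearMap.charpoly T).Monic := LinearMap.charpoly_monic T
  set p := LinearMap.charpoly T with hp
  set r := (X ^ m : ℂ[X]) %ₘ p with hr
  have hrd : r.natDegree < d := by
    have := natDegree_modByMonic_lt (X ^ m : ℂ[X]) hmonic
      (fun h => by simp [h] at hndeg; omega)
    rw [hr]; omega
  have key : (T ^ m) f₁ = (aeval T r) f₁ := by
    have h1 : (X ^ m : ℂ[X]) %ₘ p + p * ((X ^ m : ℂ[X]) /ₘ p) = X ^ m :=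
      modByMonic_add_div _ p
    have h2 : aeval T (X ^ m : ℂ[X]) = aeval T r + aeval T p * aeval T ((X ^ m : ℂ[X]) /ₘ p) := by
      rw [← map_mul, ← map_add, h1]
    rw [LinearMap.aeval_self_charpoly] at h2
    simp only [zero_mul, add_zero, map_pow, aeval_X] at h2
    rw [← h2]
  rw [key]
  have hsum : aeval T r = ∑ i ∈ Finset.range d, r.coeff i • T ^ i :=
    aeval_eq_sum_range' hrd T
  rw [hsum]
  rw [LinearMap.sum_apply]
  refine Submodule.sum_mem _ fun i hi => ?_
  rw [LinearMap.smul_apply]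
  refine Submodule.smul_mem _ _ (Submodule.subset_span ?_)
  exact ⟨⟨i, Finset.mem_range.mp hi⟩, rfl⟩

/-- If {T^(k-1) f₁}_{k=1}^n is a cyclic frame for ℂ^d, then for every ℓ with
1 ≤ ℓ ≤ n − d, the vectors T^(k-1) f₁ for k = ℓ+1, …, ℓ+d form a basis of ℂ^d. -/
theorem stmt_8 (d n : ℕ) (T : Module.End ℂ (EuclideanSpace ℂ (Fin d)))
    (f₁ : EuclideanSpace ℂ (Fin d))
    (hframe : Submodule.span ℂ (Set.range fun k : Fin n => (T ^ (k : ℕ)) f₁) = ⊤)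
    (hTn : T ^ n = 1) :
    ∀ ℓ : ℕ, 1 ≤ ℓ → ℓ + d ≤ n →
      LinearIndependent ℂ (fun k : Fin d => (T ^ (ℓ + (k : ℕ))) f₁) ∧
        Submodule.span ℂ (Set.range fun k : Fin d => (T ^ (ℓ + (k : ℕ))) f₁) = ⊤ := by
  intro ℓ hℓ hℓd
  have hS : Submodule.span ℂ (Set.range fun k : Fin d => (T ^ (k : ℕ)) f₁) = ⊤ := by
    rw [← top_le_iff, ← hframe]
    refine Submodule.span_le.mpr ?_
    rintro x ⟨k, rfl⟩
    exact aux_mem_span d T f₁ k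
  have hsurj : Function.Surjective (T ^ ℓ) := by
    have hmul : (T ^ ℓ) * (T ^ (ℓ * (n - 1))) = 1 := by
      rw [← pow_add]
      have : ℓ + ℓ * (n - 1) = n * ℓ := by
        have hn : 1 ≤ n := by omega
        cases n with
        | zero => omega
        | succ k =>
            have h1 : k + 1 - 1 = k := by omega
            rw [h1]; ring
      rw [this, pow_mul, hTn, one_pow]
    intro y
    exact ⟨(T ^ (ℓ * (n - 1))) y, by
      have := congrArg (fun f : Module.End ℂ (EuclideanSpace ℂ (Fin d)) => f y) hmul
      simpa using this⟩
  have hcomp : (fun k : Fin d => (T ^ (ℓ + (k : ℕ))) f₁)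
      = (T ^ ℓ) ∘ (fun k : Fin d => (T ^ (k : ℕ)) f₁) := by
    funext k
    simp [pow_add, Module.End.mul_apply]
  have hspan : Submodule.span ℂ (Set.range fun k : Fin d => (T ^ (ℓ + (k : ℕ))) f₁) = ⊤ := by
    rw [hcomp, Set.range_comp, Submodule.span_image, hS, Submodule.map_top,
      LinearMap.range_eq_top.mpr hsurj]
  refine ⟨?_, hspan⟩
  refine linearIndependent_of_top_le_span_of_card_eq_finrank (le_of_eq hspan.symm) ?_
  simp [finrank_euclideanSpace_fin]
end

section
/- Let f₁, …, f_d be a basis of ℂ^d and set f_{d+1} := −f₁ − f₂ − ⋯ − f_d. Define T by T f_k = f_{k+1} for k = 1, …, d. Then T^{d+1} = I, and hence {f_k}_{k=1}^{d+1} = {T^(k-1) f₁}_{k=1}^{d+1} is a cyclic frame for ℂ^d. -/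
/-- Let f₁, …, f_d be a basis of ℂ^d, f_{d+1} := −f₁ − ⋯ − f_d, and T f_k = f_{k+1} for
k = 1, …, d.  Then T^(d+1) = I and {T^(k-1) f₁}_{k=1}^{d+1} is a cyclic frame for ℂ^d. -/
theorem stmt_9 (d : ℕ) (hd : 0 < d) (f : Fin d → EuclideanSpace ℂ (Fin d))
    (hli : LinearIndependent ℂ f) (hsp : Submodule.span ℂ (Set.range f) = ⊤)
    (T : Module.End ℂ (EuclideanSpace ℂ (Fin d)))
    (hT : ∀ k : Fin d,
      T (f k) = if h : (k : ℕ) + 1 < d then f ⟨(k : ℕ) + 1, h⟩ else -∑ i : Fin d, f i) :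
    T ^ (d + 1) = 1 ∧
      Submodule.span ℂ
        (Set.range fun k : Fin (d + 1) => (T ^ (k : ℕ)) (f ⟨0, hd⟩)) = ⊤ := by
  set v : EuclideanSpace ℂ (Fin d) := f ⟨0, hd⟩ with hv
  have key : ∀ k : ℕ, ∀ h : k < d, (T ^ k) v = f ⟨k, h⟩ := by
    intro k
    induction k with
    | zero => intro h; simp [hv]
    | succ n ih =>
      intro h
      have hn : n < d := Nat.lt_of_succ_lt h
      rw [pow_succ', Module.End.mul_apply, ih hn, hT ⟨n, hn⟩]
      exact dif_pos h
  obtain ⟨m, rfl⟩ : ∃ m, d = m + 1 := ⟨d - 1, (Nat.succ_pred_eq_of_pos hd).symm⟩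
  have hTd : (T ^ (m + 1)) v = -∑ i, f i := by
    rw [pow_succ', Module.End.mul_apply, key m (Nat.lt_succ_self m),
      hT ⟨m, Nat.lt_succ_self m⟩]
    simp
  have hsum : ∑ i : Fin (m + 1), T (f i) = -v := by
    have h1 : ∀ i : Fin (m + 1), T (f i) =
        if h : (i : ℕ) + 1 < m + 1 then f ⟨(i : ℕ) + 1, h⟩ else -∑ j, f j := hT
    calc ∑ i : Fin (m + 1), T (f i)
        = ∑ i : Fin m, T (f i.castSucc) + T (f (Fin.last m)) := by
          rw [Fin.sum_univ_castSucc]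
      _ = ∑ i : Fin m, f i.succ + (-∑ j, f j) := by
          congr 1
          · apply Finset.sum_congr rfl
            intro i _
            rw [h1]
            have : (i.castSucc : ℕ) + 1 < m + 1 := Nat.succ_lt_succ i.isLt
            rw [dif_pos this]
            congr 1
          · rw [h1]
            have : ¬ ((Fin.last m : ℕ) + 1 < m + 1) := by simp
            rw [dif_neg this]
      _ = -v := by
          have := Fin.sum_univ_succ f
          rw [hv]
          have h0 : (⟨0, hd⟩ : Fin (m + 1)) = 0 := rfl
          rw [h0]
          rw [this]
          abel
  have hTd1 : (T ^ (m + 1 + 1)) v = v := by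
    rw [pow_succ', Module.End.mul_apply, hTd, map_neg, map_sum, hsum, neg_neg]
  have hfix : ∀ k : Fin (m + 1), (T ^ (m + 1 + 1)) (f k) = f k := by
    intro k
    have hk : f k = (T ^ (k : ℕ)) v := by
      rw [key k k.isLt]
    rw [hk, ← Module.End.mul_apply, ← pow_add,
      show m + 1 + 1 + (k : ℕ) = (k : ℕ) + (m + 1 + 1) from by omega, pow_add,
      Module.End.mul_apply, hTd1]
  have hpow : T ^ (m + 1 + 1) = 1 := by
    apply LinearMap.ext_on hsp
    rintro x ⟨k, rfl⟩
    simpa using hfix k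
  refine ⟨hpow, ?_⟩
  have hsub : Set.range f ⊆
      Set.range (fun k : Fin (m + 1 + 1) => (T ^ (k : ℕ)) (f ⟨0, hd⟩)) := by
    rintro x ⟨k, rfl⟩
    refine ⟨⟨(k : ℕ), Nat.lt_succ_of_lt k.isLt⟩, ?_⟩
    simp only
    rw [key k k.isLt]
  refine eq_top_iff.mpr ?_
  rw [← hsp]
  exact Submodule.span_mono hsub
end

section
/- Let {f_k}_{k=1}^n be a frame for ℂ^d with synthesis operator Θ : ℂ^n → ℂ^d, Θ(x) = Σ_{k=1}^n x(k) f_k, and let R : ℂ^n → ℂ^n be the cyclic right shift R(x(1),…,x(n)) = (x(n), x(1), …, x(n−1)). Then {f_k}_{k=1}^n is a cyclic frame (i.e., there is a linear T with T^n = I and f_k = T^(k-1) f₁) if and only if ker(Θ) is invariant under R. -/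
/-- A frame {f_k}_{k=1}^n for ℂ^d is a cyclic frame if and only if the kernel of its
synthesis operator Θ is invariant under the cyclic right shift R. -/
theorem stmt_14 (d n : ℕ) [NeZero n] (f : Fin n → EuclideanSpace ℂ (Fin d))
    (hframe : Submodule.span ℂ (Set.range f) = ⊤)
    (Θ : (Fin n → ℂ) →ₗ[ℂ] EuclideanSpace ℂ (Fin d))
    (hΘ : ∀ x : Fin n → ℂ, Θ x = ∑ k : Fin n, x k • f k)
    (R : (Fin n → ℂ) →ₗ[ℂ] (Fin n → ℂ))
    (hR : ∀ (x : Fin n → ℂ) (k : Fin n), R x k = x (k - 1)) :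
    (∃ T : Module.End ℂ (EuclideanSpace ℂ (Fin d)),
        T ^ n = 1 ∧ ∀ k : Fin n, f k = (T ^ (k : ℕ)) (f 0)) ↔
      ∀ x ∈ LinearMap.ker Θ, R x ∈ LinearMap.ker Θ := by
  have hsingle : ∀ k : Fin n, Θ (Pi.single k 1) = f k := by
    intro k
    rw [hΘ]
    simp [Pi.single_apply, ite_smul]
  open Fin.NatCast Fin.CommRing in
  have hRpow : ∀ (m : ℕ) (x : Fin n → ℂ) (k : Fin n),
      (R ^ m) x k = x (k - (m : Fin n)) := by
    intro m
    induction m with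
    | zero => intro x k; simp
    | succ m ih =>
      intro x k
      rw [pow_succ', Module.End.mul_apply, hR, ih]
      congr 1
      push_cast
      ring
  constructor
  · rintro ⟨T, hTn, hTf⟩ x hx
    have hpowmod : ∀ a : ℕ, T ^ (a % n) = T ^ a := by
      intro a
      conv_rhs => rw [← Nat.div_add_mod a n]
      rw [pow_add, pow_mul, hTn, one_pow, one_mul]
    have hstep : ∀ j : Fin n, f (j + 1) = T (f j) := by
      intro j
      rw [hTf (j + 1), hTf j]
      have h1 : ((j + 1 : Fin n) : ℕ) = ((j : ℕ) + 1) % n := by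
        simp [Fin.add_def]
      rw [h1, hpowmod, pow_succ', Module.End.mul_apply]
    have key : Θ (R x) = T (Θ x) := by
      rw [hΘ, hΘ, map_sum]
      refine Fintype.sum_equiv (Equiv.subRight (1 : Fin n)) _ _ ?_
      intro j
      simp only [Equiv.subRight_apply]
      rw [hR, map_smul, ← hstep (j - 1), sub_add_cancel]
    simp only [LinearMap.mem_ker] at hx ⊢
    rw [key, hx, map_zero]
  · intro hker
    have hsurj : Function.Surjective Θ := by
      rw [← LinearMap.range_eq_top, ← top_le_iff, ← hframe, Submodule.span_le]
      rintro _ ⟨k, rfl⟩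
      exact ⟨Pi.single k 1, hsingle k⟩
    have hker' : LinearMap.ker Θ ≤ LinearMap.ker (Θ ∘ₗ R) := by
      intro x hx
      simpa [LinearMap.mem_ker] using hker x hx
    set e := LinearMap.quotKerEquivOfSurjective Θ hsurj with he
    set T : Module.End ℂ (EuclideanSpace ℂ (Fin d)) :=
      ((LinearMap.ker Θ).liftQ (Θ ∘ₗ R) hker') ∘ₗ (e.symm : _ →ₗ[ℂ] _) with hT
    have hTapp : ∀ x, T (Θ x) = Θ (R x) := by
      intro x
      have h1 : e (Submodule.Quotient.mk x) = Θ x := rfl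
      have h2 : e.symm (Θ x) = Submodule.Quotient.mk x := by
        rw [← h1, LinearEquiv.symm_apply_apply]
      simp [hT, h2]
    have hTpow : ∀ (m : ℕ) (x : Fin n → ℂ), (T ^ m) (Θ x) = Θ ((R ^ m) x) := by
      intro m
      induction m with
      | zero => intro x; simp
      | succ m ih =>
        intro x
        rw [pow_succ', Module.End.mul_apply, ih, hTapp, ← Module.End.mul_apply,
          ← pow_succ', pow_succ, Module.End.mul_apply]
    refine ⟨T, ?_, ?_⟩
    · ext v : 1
      obtain ⟨x, rfl⟩ := hsurj v
      rw [Module.End.one_apply, hTpow]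
      congr 1
      funext k
      rw [hRpow]
      simp
    · intro k
      rw [← hsingle k, ← hsingle 0, hTpow]
      congr 1
      funext j
      rw [hRpow]
      simp [Pi.single_apply, sub_eq_zero, Fin.cast_val_eq_self, eq_comm]
end

section
/- Let {T^(k-1) f₁}_{k=1}^n be a cyclic frame for ℂ^d with frame operator S. Then the operator S^{-1/2} T S^{1/2} is unitary and satisfies (S^{-1/2} T S^{1/2})^n = I, and the family {(S^{-1/2} T S^{1/2})^(k-1) S^{-1/2} f₁}_{k=1}^n equals {S^{-1/2} T^(k-1) f₁}_{k=1}^n and is a tight cyclic frame for ℂ^d. -/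
set_option maxHeartbeats 1000000 in
/-- For a cyclic frame {T^(k-1) f₁}_{k=1}^n with frame operator S and positive square
root Q = S^{1/2} (with inverse Qinv), the operator U = S^{-1/2} T S^{1/2} is unitary,
U^n = I, the family {U^(k-1) S^{-1/2} f₁} equals {S^{-1/2} T^(k-1) f₁}, and it is a
tight cyclic frame for ℂ^d. -/
theorem stmt_19 (d n : ℕ)
    (T : EuclideanSpace ℂ (Fin d) →L[ℂ] EuclideanSpace ℂ (Fin d)) (hTn : T ^ n = 1)
    (f₁ : EuclideanSpace ℂ (Fin d))
    (hframe : Submodule.span ℂ (Set.range fun k : Fin n => (T ^ (k : ℕ)) f₁) = ⊤)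
    (S : EuclideanSpace ℂ (Fin d) →L[ℂ] EuclideanSpace ℂ (Fin d))
    (hS : ∀ g : EuclideanSpace ℂ (Fin d),
      S g = ∑ k : Fin n, (inner ℂ ((T ^ (k : ℕ)) f₁) g : ℂ) • ((T ^ (k : ℕ)) f₁))
    (Q Qinv : EuclideanSpace ℂ (Fin d) →L[ℂ] EuclideanSpace ℂ (Fin d))
    (hQsa : IsSelfAdjoint Q) (hQpos : ∀ g, 0 ≤ (inner ℂ g (Q g) : ℂ).re)
    (hQQ : Q * Q = S) (hQinv₁ : Q * Qinv = 1) (hQinv₂ : Qinv * Q = 1) :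
    (Qinv * T * Q) * ContinuousLinearMap.adjoint (Qinv * T * Q) = 1 ∧
      ContinuousLinearMap.adjoint (Qinv * T * Q) * (Qinv * T * Q) = 1 ∧
      (Qinv * T * Q) ^ n = 1 ∧
      (∀ k : Fin n, ((Qinv * T * Q) ^ (k : ℕ)) (Qinv f₁) = Qinv ((T ^ (k : ℕ)) f₁)) ∧
      ∃ A : ℝ, 0 < A ∧ ∀ g : EuclideanSpace ℂ (Fin d),
        ∑ k : Fin n, ‖(inner ℂ (((Qinv * T * Q) ^ (k : ℕ)) (Qinv f₁)) g : ℂ)‖ ^ 2 =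
          A * ‖g‖ ^ 2 := by
  -- basic star facts
  have hstarQ : star Q = Q := hQsa.star_eq
  have hstarQinv : star Qinv = Qinv := by
    have h1 : star Qinv * Q = 1 := by
      have := congrArg star hQinv₁
      simpa [star_mul, hstarQ] using this
    calc star Qinv = star Qinv * (Q * Qinv) := by rw [hQinv₁, mul_one]
      _ = (star Qinv * Q) * Qinv := by rw [mul_assoc]
      _ = Qinv := by rw [h1, one_mul]
  -- powers of U
  have hpow : ∀ k : ℕ, (Qinv * T * Q) ^ k = Qinv * T ^ k * Q := by
    intro k
    induction k with
    | zero => simp [hQinv₂]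
    | succ k ih =>
        rw [pow_succ, ih]
        calc Qinv * T ^ k * Q * (Qinv * T * Q)
            = Qinv * T ^ k * ((Q * Qinv) * (T * Q)) := by simp only [mul_assoc]
          _ = Qinv * T ^ k * (T * Q) := by rw [hQinv₁, one_mul]
          _ = Qinv * T ^ (k + 1) * Q := by rw [pow_succ]; simp only [mul_assoc]
  -- pointwise application lemmas
  have hQQinv_ap : ∀ x, Q (Qinv x) = x := fun x => by
    have := ContinuousLinearMap.ext_iff.mp hQinv₁ x
    simpa using this
  -- degenerate case n = 0
  rcases n with _ | m
  · have hS0 : S = 0 := ContinuousLinearMap.ext fun g => by simpa using hS g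
    have h10 : (1 : EuclideanSpace ℂ (Fin d) →L[ℂ] EuclideanSpace ℂ (Fin d)) = 0 := by
      calc (1 : EuclideanSpace ℂ (Fin d) →L[ℂ] EuclideanSpace ℂ (Fin d))
          = (Qinv * Q) * (Q * Qinv) := by rw [hQinv₂, hQinv₁, one_mul]
        _ = Qinv * (Q * Q) * Qinv := by simp only [mul_assoc]
        _ = 0 := by rw [hQQ, hS0, mul_zero, zero_mul]
    have hall : ∀ X Y : EuclideanSpace ℂ (Fin d) →L[ℂ] EuclideanSpace ℂ (Fin d), X = Y :=
      fun X Y => by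
        calc X = X * 1 := (mul_one X).symm
          _ = 0 := by rw [h10, mul_zero]
          _ = Y * 1 := by rw [h10, mul_zero]
          _ = Y := mul_one Y
    refine ⟨hall _ _, hall _ _, hall _ _, fun k => k.elim0, 1, one_pos, fun g => ?_⟩
    have hg : g = 0 := by
      have := ContinuousLinearMap.ext_iff.mp h10 g
      simpa using this
    simp [hg]
  -- main case n = m + 1
  · set U := Qinv * T * Q with hU
    -- key identity T S T* = S
    have hval : ∀ k : Fin (m + 1), T ^ ((finRotate (m + 1) k : Fin (m+1)) : ℕ) = T ^ ((k : ℕ) + 1) := by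
      intro k
      rw [finRotate_succ_apply, Fin.val_add_one]
      split_ifs with h
      · rw [h, Fin.val_last, pow_zero]
        exact hTn.symm
      · rfl
    have key : ∀ g, T (S (ContinuousLinearMap.adjoint T g)) = S g := by
      intro g
      rw [hS, hS g, map_sum]
      calc ∑ k : Fin (m+1),
            T ((inner ℂ ((T ^ (k : ℕ)) f₁) (ContinuousLinearMap.adjoint T g) : ℂ) • (T ^ (k : ℕ)) f₁)
          = ∑ k : Fin (m+1),
            (inner ℂ ((T ^ ((k : ℕ) + 1)) f₁) g : ℂ) • (T ^ ((k : ℕ) + 1)) f₁ := by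
            refine Finset.sum_congr rfl fun k _ => ?_
            rw [map_smul, ContinuousLinearMap.adjoint_inner_right]
            have hTT : T ((T ^ (k : ℕ)) f₁) = (T ^ ((k : ℕ) + 1)) f₁ := by
              rw [pow_succ']
              rfl
            rw [hTT]
        _ = ∑ k : Fin (m+1), (inner ℂ ((T ^ (k : ℕ)) f₁) g : ℂ) • (T ^ (k : ℕ)) f₁ := by
            refine Fintype.sum_equiv (finRotate (m+1)) _ _ fun k => ?_
            rw [hval k]
    have hTST : T * S * ContinuousLinearMap.adjoint T = S :=
      ContinuousLinearMap.ext fun g => by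
        simpa [ContinuousLinearMap.mul_apply] using key g
    -- U U* = 1
    have hUUstar : U * ContinuousLinearMap.adjoint U = 1 := by
      have hsU : ContinuousLinearMap.adjoint U = Q * (ContinuousLinearMap.adjoint T * Qinv) := by
        rw [← ContinuousLinearMap.star_eq_adjoint, ← ContinuousLinearMap.star_eq_adjoint, hU]
        simp [star_mul, hstarQ, hstarQinv, mul_assoc]
      rw [hsU, hU]
      calc Qinv * T * Q * (Q * (ContinuousLinearMap.adjoint T * Qinv))
          = Qinv * ((T * (Q * Q) * ContinuousLinearMap.adjoint T) * Qinv) := by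
            simp only [mul_assoc]
        _ = Qinv * ((T * S * ContinuousLinearMap.adjoint T) * Qinv) := by rw [hQQ]
        _ = Qinv * (S * Qinv) := by rw [hTST]
        _ = (Qinv * Q) * (Q * Qinv) := by rw [← hQQ]; simp only [mul_assoc]
        _ = 1 := by rw [hQinv₁, hQinv₂, one_mul]
    -- U^n = 1
    have hUn : U ^ (m + 1) = 1 := by
      rw [hpow, hTn, mul_one, hQinv₂]
    have hA : U ^ m * U = 1 := by rw [← pow_succ, hUn]
    have hB : U * U ^ m = 1 := by rw [← pow_succ', hUn]
    -- U* = U^m, hence U* U = 1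
    have hadj : ContinuousLinearMap.adjoint U = U ^ m := by
      calc ContinuousLinearMap.adjoint U
          = (U ^ m * U) * ContinuousLinearMap.adjoint U := by rw [hA, one_mul]
        _ = U ^ m * (U * ContinuousLinearMap.adjoint U) := by rw [mul_assoc]
        _ = U ^ m := by rw [hUUstar, mul_one]
    have hUstarU : ContinuousLinearMap.adjoint U * U = 1 := by rw [hadj, hA]
    -- the family identity
    have hfam : ∀ k : Fin (m + 1), (U ^ (k : ℕ)) (Qinv f₁) = Qinv ((T ^ (k : ℕ)) f₁) := by
      intro k
      rw [hpow]
      simp only [ContinuousLinearMap.mul_apply]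
      rw [hQQinv_ap]
    refine ⟨hUUstar, hUstarU, hUn, hfam, 1, one_pos, fun g => ?_⟩
    -- tightness
    have hQinvadj : ContinuousLinearMap.adjoint Qinv = Qinv := by
      rw [← ContinuousLinearMap.star_eq_adjoint, hstarQinv]
    have hQadj : ContinuousLinearMap.adjoint Q = Q := by
      rw [← ContinuousLinearMap.star_eq_adjoint, hstarQ]
    have hterm : ∀ k : Fin (m + 1),
        (inner ℂ ((U ^ (k : ℕ)) (Qinv f₁)) g : ℂ) = inner ℂ ((T ^ (k : ℕ)) f₁) (Qinv g) := by
      intro k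
      rw [hfam k]
      conv_lhs => rw [← hQinvadj]
      exact ContinuousLinearMap.adjoint_inner_left _ _ _
    calc ∑ k : Fin (m+1), ‖(inner ℂ ((U ^ (k : ℕ)) (Qinv f₁)) g : ℂ)‖ ^ 2
        = ∑ k : Fin (m+1), ‖(inner ℂ ((T ^ (k : ℕ)) f₁) (Qinv g) : ℂ)‖ ^ 2 := by
          refine Finset.sum_congr rfl fun k _ => ?_
          rw [hterm k]
      _ = (inner ℂ (Qinv g) (S (Qinv g)) : ℂ).re := by
          rw [hS, inner_sum, Complex.re_sum]
          refine Finset.sum_congr rfl fun k _ => ?_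
          rw [inner_smul_right, ← inner_conj_symm (Qinv g) ((T ^ (k : ℕ)) f₁),
            RCLike.mul_conj]
          norm_cast
      _ = (inner ℂ (Qinv g) (Q (Q (Qinv g))) : ℂ).re := by rw [← hQQ]; rfl
      _ = 1 * ‖g‖ ^ 2 := by
          have hmov : (inner ℂ (Qinv g) (Q (Q (Qinv g))) : ℂ)
              = inner ℂ (Q (Qinv g)) (Q (Qinv g)) := by
            have h := ContinuousLinearMap.adjoint_inner_right Q (Qinv g) (Q (Qinv g))
            rw [hQadj] at h
            exact h
          rw [hmov, hQQinv_ap, inner_self_eq_norm_sq_to_K, one_mul]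
          norm_cast
end
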